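/- For all Schwartz functions f₁,f₂,f₃,f₄ on ℝ, ∫_ℝ ( ∫_{{(ξ₁,ξ₂,ξ₄)∈ℝ³ : ξ₁+ξ₂+ξ₄≤0 and −ξ₄/2<ξ₂}} f̂₁(ξ₁) f̂₂(ξ₂) f̂₄(ξ₄) e^{2πix(ξ₁+ξ₂+ξ₄)} dξ₁dξ₂dξ₄ ) · f₃(x) dx = ∫_ℝ ( ∫_{{(ξ₁,ξ₂,ξ₃)∈ℝ³ : ξ₁+ξ₃<ξ₂ and 0<ξ₃}} f̂₁(ξ₁) f̂₂(ξ₂) f̂₃(ξ₃) e^{2πix(ξ₁+ξ₂+ξ₃)} dξ₁dξ₂dξ₃ ) · f₄(x) dx. -/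

import Mathlib

/-!
Integrating out `x` first turns each side into an integral over a region of `ℝ³` of a product
of four Fourier transforms, the fourth evaluated at minus the sum of the three frequencies:
`∫ e^{2πixσ} f(x) dx = f̂(-σ)`. The shear `(ξ₁, ξ₂, ξ₃) ↦ (ξ₁, ξ₂, -(ξ₁ + ξ₂ + ξ₃))` preserves
Lebesgue measure and exchanges these two integrands, and it maps the region of the right-hand
side onto that of the left-hand side up to the null plane `ξ₁ + ξ₂ + ξ₃ = 0`.
-/

open MeasureTheory Complex FourierTransform

theorem norm_exp_two_pi_I_mul_mul (x t : ℝ) : ‖exp (2 * Real.pi * I * x * t)‖ = 1 := by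
  rw [show 2 * Real.pi * I * x * t = ((2 * Real.pi * x * t : ℝ) : ℂ) * I by push_cast; ring]
  exact norm_exp_ofReal_mul_I _

theorem integral_exp_mul_eq_fourier_neg (f : ℝ → ℂ) (σ : ℝ) :
    ∫ x : ℝ, exp (2 * Real.pi * I * x * σ) * f x = 𝓕 f (-σ) := by
  rw [Real.fourier_real_eq_integral_exp_smul]
  congr 1 with x
  rw [smul_eq_mul]
  congr 2
  push_cast
  ring

theorem measurePreserving_prodMk_sub {α : Type*} [MeasurableSpace α] (μ : Measure α) [SFinite μ]
    {φ : α → ℝ} (hφ : Measurable φ) :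
    MeasurePreserving (fun p : α × ℝ => (p.1, φ p.1 - p.2)) (μ.prod volume) (μ.prod volume) :=
  (MeasurePreserving.id μ).skew_product (by fun_prop)
    (ae_of_all _ fun a => (volume.measurePreserving_sub_left (φ a)).map_eq)

theorem integral_integral_exp_mul {α : Type*} [MeasurableSpace α] {μ : Measure α} [SFinite μ]
    {G : α → ℂ} (hG : Integrable G μ) {σ : α → ℝ} (hσ : Measurable σ)
    {f : ℝ → ℂ} (hf : Integrable f) :
    ∫ x : ℝ, (∫ ξ, G ξ * exp (2 * Real.pi * I * x * σ ξ) ∂μ) * f x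
      = ∫ ξ, G ξ * 𝓕 f (-σ ξ) ∂μ := by
  have hprod : Integrable (fun p : ℝ × α => G p.2 * exp (2 * Real.pi * I * p.1 * σ p.2) * f p.1)
      (volume.prod μ) := by
    refine (hf.norm.mul_prod hG.norm).mono' ?_ (ae_of_all _ fun p => ?_)
    · exact (hG.1.comp_snd.mul (by fun_prop : Measurable _).aestronglyMeasurable).mul hf.1.comp_fst
    · rw [norm_mul, norm_mul, norm_exp_two_pi_I_mul_mul, mul_one, mul_comm]
  calc ∫ x : ℝ, (∫ ξ, G ξ * exp (2 * Real.pi * I * x * σ ξ) ∂μ) * f x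
      = ∫ x : ℝ, ∫ ξ, G ξ * exp (2 * Real.pi * I * x * σ ξ) * f x ∂μ := by
        simp only [integral_mul_const]
    _ = ∫ ξ, (∫ x : ℝ, G ξ * (exp (2 * Real.pi * I * x * σ ξ) * f x)) ∂μ := by
        simp only [← mul_assoc]
        exact integral_integral_swap hprod
    _ = ∫ ξ, G ξ * 𝓕 f (-σ ξ) ∂μ := by
        simp only [integral_const_mul, integral_exp_mul_eq_fourier_neg]

/-- On the hyperplane `ξ₁ + ξ₂ + ξ₃ + ξ₄ = 0`, this exchanges the frequencies `ξ₃` and `ξ₄`. -/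
def frequencySwap (ξ : ℝ × ℝ × ℝ) : ℝ × ℝ × ℝ := (ξ.1, ξ.2.1, -(ξ.1 + ξ.2.1 + ξ.2.2))

theorem frequencySwap_involutive : Function.Involutive frequencySwap := by
  intro ξ
  ext <;> simp only [frequencySwap]
  ring

theorem measurable_frequencySwap : Measurable frequencySwap := by
  unfold frequencySwap
  fun_prop

theorem measurableEmbedding_frequencySwap : MeasurableEmbedding frequencySwap :=
  (MeasurableEquiv.ofInvolutive _ frequencySwap_involutive
    measurable_frequencySwap).measurableEmbedding

theorem measurePreserving_frequencySwap : MeasurePreserving frequencySwap := by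
  have h := (MeasurePreserving.id (volume : Measure ℝ)).skew_product
    (g := fun a (q : ℝ × ℝ) => (q.1, -(a + q.1) - q.2)) (by fun_prop)
    (ae_of_all _ fun a => (measurePreserving_prodMk_sub volume
      (φ := fun b => -(a + b)) (by fun_prop)).map_eq)
  simp only [id, ← Measure.volume_eq_prod] at h
  convert h using 1
  ext ξ <;> simp only [frequencySwap]
  ring

theorem ae_add_add_ne_zero : ∀ᵐ ξ : ℝ × ℝ × ℝ, ξ.1 + ξ.2.1 + ξ.2.2 ≠ 0 := by
  have h : ∀ᵐ η : ℝ × ℝ × ℝ, η.2.2 ≠ 0 := by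
    rw [ae_iff, show {η : ℝ × ℝ × ℝ | ¬η.2.2 ≠ 0} = Set.univ ×ˢ (Set.univ ×ˢ {0}) by ext; simp]
    simp [Measure.volume_eq_prod, Measure.prod_prod]
  filter_upwards [measurePreserving_frequencySwap.quasiMeasurePreserving.ae h] with ξ hξ
  contrapose! hξ
  simp only [frequencySwap]
  linarith

theorem frequencySwap_preimage_ae_eq :
    frequencySwap ⁻¹' {p | p.1 + p.2.2 < p.2.1 ∧ 0 < p.2.2}
      =ᵐ[volume] {p : ℝ × ℝ × ℝ | p.1 + p.2.1 + p.2.2 ≤ 0 ∧ -p.2.2 / 2 < p.2.1} := by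
  filter_upwards [ae_add_add_ne_zero] with ξ hξ
  simp only [frequencySwap, Set.preimage_ofPred_eq, eq_iff_iff]
  constructor
  · rintro ⟨h₁, h₂⟩; constructor <;> linarith
  · rintro ⟨h₁, h₂⟩; constructor <;> [linarith; exact neg_pos.2 (lt_of_le_of_ne h₁ hξ)]

/-- Duality identity `∫ H⁻(f₁·C^{−2,1}(f₄,f₂))·f₃ = ∫ C^{1,1}(f₁·H⁺(f₃),f₂)·f₄`,
written entirely on the frequency side. -/
theorem duality_third_term (f₁ f₂ f₃ f₄ : SchwartzMap ℝ ℂ) :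
    (∫ x : ℝ,
        (∫ ξ in {p : ℝ × ℝ × ℝ |
            p.1 + p.2.1 + p.2.2 ≤ 0 ∧ -p.2.2 / 2 < p.2.1},
          FourierTransform.fourier (⇑f₁ : ℝ → ℂ) ξ.1 * FourierTransform.fourier (⇑f₂ : ℝ → ℂ) ξ.2.1 *
            FourierTransform.fourier (⇑f₄ : ℝ → ℂ) ξ.2.2 *
            Complex.exp ((2 : ℂ) * (Real.pi : ℂ) * Complex.I * (x : ℂ) *
              ((ξ.1 : ℂ) + (ξ.2.1 : ℂ) + (ξ.2.2 : ℂ)))) * f₃ x) =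
      ∫ x : ℝ,
        (∫ ξ in {p : ℝ × ℝ × ℝ | p.1 + p.2.2 < p.2.1 ∧ 0 < p.2.2},
          FourierTransform.fourier (⇑f₁ : ℝ → ℂ) ξ.1 * FourierTransform.fourier (⇑f₂ : ℝ → ℂ) ξ.2.1 *
            FourierTransform.fourier (⇑f₃ : ℝ → ℂ) ξ.2.2 *
            Complex.exp ((2 : ℂ) * (Real.pi : ℂ) * Complex.I * (x : ℂ) *
              ((ξ.1 : ℂ) + (ξ.2.1 : ℂ) + (ξ.2.2 : ℂ)))) * f₄ x := by
  have hG (g₁ g₂ g₃ : SchwartzMap ℝ ℂ) :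
      Integrable (fun ξ : ℝ × ℝ × ℝ => 𝓕 (⇑g₁) ξ.1 * 𝓕 (⇑g₂) ξ.2.1 * 𝓕 (⇑g₃) ξ.2.2) := by
    simpa only [Measure.volume_eq_prod, mul_assoc] using
      (𝓕 g₁).integrable.mul_prod ((𝓕 g₂).integrable.mul_prod (𝓕 g₃).integrable)
  simp only [← ofReal_add]
  rw [integral_integral_exp_mul (hG f₁ f₂ f₄).integrableOn (by fun_prop) f₃.integrable,
    integral_integral_exp_mul (hG f₁ f₂ f₃).integrableOn (by fun_prop) f₄.integrable,
    ← measurePreserving_frequencySwap.setIntegral_preimage_emb measurableEmbedding_frequencySwap _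
      {p | p.1 + p.2.2 < p.2.1 ∧ 0 < p.2.2},
    setIntegral_congr_set frequencySwap_preimage_ae_eq]
  congr 1 with ξ
  simp only [frequencySwap, neg_neg, show ξ.1 + ξ.2.1 + -(ξ.1 + ξ.2.1 + ξ.2.2) = -ξ.2.2 by ring]
  ring
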